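/- arXiv:1511.00512 — 3 statements merged into one kernel-verified Lean document; each statement's English description precedes it below -/
import Mathlib

section
/- Let f : M → ℝ be a C² function on a compact Riemannian manifold and φ a function with f = (τ - |φ|²)/2, satisfying Δf + |φ|²·f = g where g ≥ 0 (Δ the positive Laplacian). Then f ≥ 0 everywhere; equivalently |φ|² ≤ τ. -/
theorem nonneg_of_lap_add_mul_nonneg {M : Type*} [TopologicalSpace M] [CompactSpace M]
    {f lapf c : M → ℝ} (hf : Continuous f)
    (hmin : ∀ x, IsMinOn f Set.univ x → lapf x ≤ 0)
    (hsuper : ∀ x, 0 ≤ lapf x + c x * f x)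
    (hc : ∀ x, f x < 0 → 0 < c x) (x : M) :
    0 ≤ f x := by
  obtain ⟨x₀, -, hx₀⟩ :=
    isCompact_univ.exists_isMinOn ⟨x, Set.mem_univ x⟩ hf.continuousOn
  have hmin₀ : 0 ≤ f x₀ := by
    by_contra! hneg
    linarith [hsuper x₀, hmin x₀ hx₀, mul_neg_of_pos_of_neg (hc x₀ hneg) hneg]
  exact hmin₀.trans (hx₀ (Set.mem_univ x))

theorem stmt4_general {M : Type*} [TopologicalSpace M] [CompactSpace M]
    (τ : ℝ) (hτ : 0 < τ) (f lapf g : M → ℝ) (φ : M → ℂ)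
    (hf : Continuous f)
    (hmin : ∀ x, IsMinOn f Set.univ x → lapf x ≤ 0)
    (heq : ∀ x, lapf x + ‖φ x‖ ^ 2 * f x = g x)
    (hg : ∀ x, 0 ≤ g x)
    (hfdef : ∀ x, f x = (τ - ‖φ x‖ ^ 2) / 2) :
    ∀ x, 0 ≤ f x ∧ ‖φ x‖ ^ 2 ≤ τ := by
  have hf_nonneg : ∀ x, 0 ≤ f x :=
    nonneg_of_lap_add_mul_nonneg hf hmin (fun x ↦ heq x ▸ hg x)
      (fun x hx ↦ by linarith [hfdef x])
  exact fun x ↦ ⟨hf_nonneg x, by linarith [hf_nonneg x, hfdef x]⟩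

theorem stmt4 {M : Type*} [TopologicalSpace M] [CompactSpace M] [Nonempty M]
    (τ : ℝ) (hτ : 0 < τ) (f lapf g : M → ℝ) (φ : M → ℂ)
    (hf : Continuous f)
    (hmin : ∀ x, IsMinOn f Set.univ x → lapf x ≤ 0)
    (heq : ∀ x, lapf x + ‖φ x‖ ^ 2 * f x = g x)
    (hg : ∀ x, 0 ≤ g x)
    (hfdef : ∀ x, f x = (τ - ‖φ x‖ ^ 2) / 2) :
    ∀ x, 0 ≤ f x ∧ ‖φ x‖ ^ 2 ≤ τ :=
  stmt4_general τ hτ f lapf g φ hf hmin heq hg hfdef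
end

section
/- Let τ₀ = 4πd/Area(Σ) for a closed surface Σ of area Area(Σ) and a positive integer d. If τ < τ₀, then there is no pair (∇, φ) satisfying iΛF_∇ = (τ - |φ|²)/2 with ∫_Σ iΛF_∇ ω = 2πd. -/
open MeasureTheory

lemma integral_const_sub_le_of_nonneg {S : Type*} [MeasurableSpace S] {μ : Measure S}
    [IsFiniteMeasure μ] {f : S → ℝ} (hf : Integrable f μ) (hf₀ : 0 ≤ᵐ[μ] f) (c : ℝ) :
    ∫ x, (c - f x) ∂μ ≤ c * μ.real Set.univ := by
  rw [integral_sub (integrable_const c) hf, integral_const, smul_eq_mul, mul_comm]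
  linarith [integral_nonneg_of_ae hf₀]

theorem stmt6_general {S : Type*} [MeasurableSpace S] (μ : Measure S) [IsFiniteMeasure μ]
    (τ : ℝ) (d : ℕ)
    (hτ : τ * (μ Set.univ).toReal < 4 * Real.pi * d) :
    ¬ ∃ (iLF : S → ℝ) (φ : S → ℂ),
        Integrable (fun x => ‖φ x‖ ^ 2) μ ∧
        (∀ x, iLF x = (τ - ‖φ x‖ ^ 2) / 2) ∧
        ∫ x, iLF x ∂μ = 2 * Real.pi * d := by
  rintro ⟨iLF, φ, hφ, hiLF, hdeg⟩
  have hle : ∫ x, (τ - ‖φ x‖ ^ 2) ∂μ ≤ τ * μ.real Set.univ :=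
    integral_const_sub_le_of_nonneg hφ (.of_forall fun x => sq_nonneg _) τ
  have hhalf : ∫ x, iLF x ∂μ = (∫ x, (τ - ‖φ x‖ ^ 2) ∂μ) / 2 := by
    rw [funext hiLF, integral_div]
  rw [measureReal_def] at hle
  linarith

theorem stmt6 {S : Type*} [MeasurableSpace S] (μ : Measure S) [IsFiniteMeasure μ]
    (τ : ℝ) (d : ℕ) (hd : 0 < d)
    (harea : 0 < (μ Set.univ).toReal)
    (hτ : τ * (μ Set.univ).toReal < 4 * Real.pi * d) :
    ¬ ∃ (iLF : S → ℝ) (φ : S → ℂ),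
        Integrable (fun x => ‖φ x‖ ^ 2) μ ∧
        (∀ x, iLF x = (τ - ‖φ x‖ ^ 2) / 2) ∧
        ∫ x, iLF x ∂μ = 2 * Real.pi * d :=
  stmt6_general μ τ d hτ
end

section
/- Let A and B be compactly supported C¹ functions on ℝ², and let f : ℝ² → ℝ be the function equal to 0 on the open upper-left quadrant, 1 on the open upper-right and lower-left quadrants, and 2 on the open lower-right quadrant. Then ∫_{ℝ²} f·(∂A/∂y - ∂B/∂x) dx dy = ∫_{-∞}^{∞} A(x, 0) dx + ∫_{-∞}^{∞} B(0, y) dy. -/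
/-!
Off the two axes, which are null, `f = 𝟙{x > 0} + 𝟙{y < 0}`. By Fubini, `∂A/∂y` integrates
along each vertical line to `0`, and over its lower half `y < 0` to `A (x, 0)`; likewise `∂B/∂x`
integrates along each horizontal line to `0`, and over its right half `x > 0` to `-B (0, y)`.
-/

open MeasureTheory Set

section Slices

variable {X Y M : Type*} [TopologicalSpace X] [TopologicalSpace Y] [Zero M] {F : X × Y → M}

theorem HasCompactSupport.comp_prodMk_left [T1Space X] (hF : HasCompactSupport F) (x : X) :
    HasCompactSupport fun y => F (x, y) :=
  hF.comp_isClosedEmbedding <|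
    .of_continuous_injective_isClosedMap (by fun_prop) (Prod.mk_right_injective x)
      (isClosedMap_prodMk_left x)

theorem HasCompactSupport.comp_prodMk_right [T1Space Y] (hF : HasCompactSupport F) (y : Y) :
    HasCompactSupport fun x => F (x, y) :=
  hF.comp_isClosedEmbedding <|
    .of_continuous_injective_isClosedMap (by fun_prop) (Prod.mk_left_injective y)
      (isClosedMap_prodMk_right y)

end Slices

section PartialDerivatives

variable {E : Type*} [NormedAddCommGroup E] [NormedSpace ℝ E] {F : ℝ × ℝ → E} {x y : ℝ}

theorem DifferentiableAt.hasDerivAt_comp_prodMk_left (hF : DifferentiableAt ℝ F (x, y)) :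
    HasDerivAt (fun y => F (x, y)) (fderiv ℝ F (x, y) (0, 1)) y :=
  hF.hasFDerivAt.comp_hasDerivAt y ((hasDerivAt_const y x).prodMk (hasDerivAt_id y))

theorem DifferentiableAt.hasDerivAt_comp_prodMk_right (hF : DifferentiableAt ℝ F (x, y)) :
    HasDerivAt (fun x => F (x, y)) (fderiv ℝ F (x, y) (1, 0)) x :=
  hF.hasFDerivAt.comp_hasDerivAt x ((hasDerivAt_id x).prodMk (hasDerivAt_const x y))

end PartialDerivatives

section CompactSupportIntegrals

variable {E : Type*} [NormedAddCommGroup E] [NormedSpace ℝ E] {F : ℝ × ℝ → E}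

theorem HasCompactSupport.integral_deriv_eq_zero {f : ℝ → E} (hf : ContDiff ℝ 1 f)
    (h2f : HasCompactSupport f) : ∫ x, deriv f x = 0 :=
  integral_eq_zero_of_hasDerivAt_of_integrable
    (fun x => (hf.differentiable one_ne_zero x).hasDerivAt)
    ((hf.continuous_deriv le_rfl).integrable_of_hasCompactSupport h2f.deriv)
    (hf.continuous.integrable_of_hasCompactSupport h2f)

theorem HasCompactSupport.integrable_fderiv_apply (hFc : HasCompactSupport F)
    (hF : ContDiff ℝ 1 F) (v : ℝ × ℝ) :
    Integrable fun p => fderiv ℝ F p v :=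
  ((hF.continuous_fderiv one_ne_zero).clm_apply continuous_const).integrable_of_hasCompactSupport
    (hFc.fderiv_apply ℝ v)

theorem HasCompactSupport.setIntegral_prod_univ_fderiv_snd (hFc : HasCompactSupport F)
    (hF : ContDiff ℝ 1 F) (s : Set ℝ) : ∫ p in s ×ˢ univ, fderiv ℝ F p (0, 1) = 0 := by
  rw [Measure.volume_eq_prod, setIntegral_prod _ (hFc.integrable_fderiv_apply hF _).integrableOn]
  refine integral_eq_zero_of_ae (.of_forall fun x => ?_)
  have hslice : ContDiff ℝ 1 fun y => F (x, y) := hF.comp (contDiff_prodMk_right x)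
  simp_rw [Measure.restrict_univ,
    ← fun y => ((hF.differentiable one_ne_zero (x, y)).hasDerivAt_comp_prodMk_left).deriv]
  exact (hFc.comp_prodMk_left x).integral_deriv_eq_zero hslice

theorem HasCompactSupport.setIntegral_univ_prod_fderiv_fst (hFc : HasCompactSupport F)
    (hF : ContDiff ℝ 1 F) (t : Set ℝ) : ∫ p in univ ×ˢ t, fderiv ℝ F p (1, 0) = 0 := by
  rw [Measure.volume_eq_prod, ← setIntegral_prod_swap, setIntegral_prod _ ?_]
  · refine integral_eq_zero_of_ae (.of_forall fun y => ?_)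
    have hslice : ContDiff ℝ 1 fun x => F (x, y) := hF.comp (contDiff_prodMk_left y)
    simp_rw [Prod.swap_prod_mk, Measure.restrict_univ,
      ← fun x => ((hF.differentiable one_ne_zero (x, y)).hasDerivAt_comp_prodMk_right).deriv]
    exact (hFc.comp_prodMk_right y).integral_deriv_eq_zero hslice
  · exact (hFc.integrable_fderiv_apply hF _).swap.integrableOn

variable [CompleteSpace E]

theorem HasCompactSupport.integral_Iio_deriv_eq {f : ℝ → E} (hf : ContDiff ℝ 1 f)
    (h2f : HasCompactSupport f) (b : ℝ) : ∫ x in Iio b, deriv f x = f b := by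
  rw [← integral_Iic_eq_integral_Iio, h2f.integral_Iic_deriv_eq hf]

theorem HasCompactSupport.setIntegral_univ_prod_Iio_fderiv_snd (hFc : HasCompactSupport F)
    (hF : ContDiff ℝ 1 F) (b : ℝ) :
    ∫ p in univ ×ˢ Iio b, fderiv ℝ F p (0, 1) = ∫ x, F (x, b) := by
  rw [Measure.volume_eq_prod, setIntegral_prod _ (hFc.integrable_fderiv_apply hF _).integrableOn,
    Measure.restrict_univ]
  refine integral_congr_ae (.of_forall fun x => ?_)
  have hslice : ContDiff ℝ 1 fun y => F (x, y) := hF.comp (contDiff_prodMk_right x)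
  simp_rw [← fun y => ((hF.differentiable one_ne_zero (x, y)).hasDerivAt_comp_prodMk_left).deriv]
  exact (hFc.comp_prodMk_left x).integral_Iio_deriv_eq hslice b

theorem HasCompactSupport.setIntegral_Ioi_prod_univ_fderiv_fst (hFc : HasCompactSupport F)
    (hF : ContDiff ℝ 1 F) (a : ℝ) :
    ∫ p in Ioi a ×ˢ univ, fderiv ℝ F p (1, 0) = -∫ y, F (a, y) := by
  rw [Measure.volume_eq_prod, ← setIntegral_prod_swap, setIntegral_prod _ ?_,
    Measure.restrict_univ, ← integral_neg]
  · refine integral_congr_ae (.of_forall fun y => ?_)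
    have hslice : ContDiff ℝ 1 fun x => F (x, y) := hF.comp (contDiff_prodMk_left y)
    simp_rw [Prod.swap_prod_mk,
      ← fun x => ((hF.differentiable one_ne_zero (x, y)).hasDerivAt_comp_prodMk_right).deriv]
    exact (hFc.comp_prodMk_right y).integral_Ioi_deriv_eq hslice a
  · exact (hFc.integrable_fderiv_apply hF _).swap.integrableOn

end CompactSupportIntegrals

theorem MeasureTheory.Measure.ae_fst_ne_and_snd_ne {α β : Type*} [MeasurableSpace α]
    [MeasurableSpace β] {μ : Measure α} {ν : Measure β} [NullSingletonClass μ]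
    [NullSingletonClass ν] (a : α) (b : β) :
    ∀ᵐ p ∂μ.prod ν, p.1 ≠ a ∧ p.2 ≠ b :=
  (Measure.quasiMeasurePreserving_fst.ae (μ.ae_ne a)).and
    (Measure.quasiMeasurePreserving_snd.ae (ν.ae_ne b))

theorem integral_indicator_one_add_indicator_one_mul {α : Type*} [MeasurableSpace α]
    {μ : Measure α} {s t : Set α} {h : α → ℝ} (hs : MeasurableSet s) (ht : MeasurableSet t)
    (hh : Integrable h μ) :
    ∫ x, (s.indicator 1 x + t.indicator 1 x) * h x ∂μ =
      ∫ x in s, h x ∂μ + ∫ x in t, h x ∂μ := by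
  simp_rw [add_mul, ← indicator_mul_left, Pi.one_apply, one_mul]
  rw [integral_add (hh.indicator hs) (hh.indicator ht), integral_indicator hs,
    integral_indicator ht]

theorem stmt10 (A B : ℝ × ℝ → ℝ) (hA : ContDiff ℝ 1 A) (hB : ContDiff ℝ 1 B)
    (hAc : HasCompactSupport A) (hBc : HasCompactSupport B)
    (f : ℝ × ℝ → ℝ)
    (hUL : ∀ p : ℝ × ℝ, p.1 < 0 → 0 < p.2 → f p = 0)
    (hUR : ∀ p : ℝ × ℝ, 0 < p.1 → 0 < p.2 → f p = 1)
    (hLL : ∀ p : ℝ × ℝ, p.1 < 0 → p.2 < 0 → f p = 1)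
    (hLR : ∀ p : ℝ × ℝ, 0 < p.1 → p.2 < 0 → f p = 2) :
    ∫ p : ℝ × ℝ, f p * (fderiv ℝ A p (0, 1) - fderiv ℝ B p (1, 0))
      = (∫ x : ℝ, A (x, 0)) + ∫ y : ℝ, B (0, y) := by
  have hf : f =ᵐ[volume] fun p => (Ioi 0 ×ˢ univ : Set (ℝ × ℝ)).indicator 1 p +
      (univ ×ˢ Iio 0 : Set (ℝ × ℝ)).indicator 1 p := by
    filter_upwards [Measure.ae_fst_ne_and_snd_ne 0 0] with p ⟨h1, h2⟩
    rcases h1.lt_or_gt with h1 | h1 <;> rcases h2.lt_or_gt with h2 | h2 <;>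
      simp [h1, h2, h1.not_gt, h2.not_gt, hUL, hUR, hLL, hLR, one_add_one_eq_two]
  have hDA := hAc.integrable_fderiv_apply hA (0, 1)
  have hDB := hBc.integrable_fderiv_apply hB (1, 0)
  rw [integral_congr_ae (by filter_upwards [hf] with p hp; rw [hp]),
    integral_indicator_one_add_indicator_one_mul (measurableSet_Ioi.prod .univ)
      (MeasurableSet.univ.prod measurableSet_Iio) (by exact hDA.sub hDB),
    integral_sub hDA.integrableOn hDB.integrableOn, integral_sub hDA.integrableOn hDB.integrableOn,
    hAc.setIntegral_prod_univ_fderiv_snd hA, hAc.setIntegral_univ_prod_Iio_fderiv_snd hA,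
    hBc.setIntegral_Ioi_prod_univ_fderiv_fst hB, hBc.setIntegral_univ_prod_fderiv_fst hB]
  ring
end
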